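/- arXiv:2204.00589 — 2 statements merged into one kernel-verified Lean document; each statement's English description precedes it below -/
import Mathlib

section
/- Let p > 1. For every ε ∈ [0,1] and every U ∈ ℝ, |f_ε'(U) - f_0'(U)| ≤ ε |U|^{p-1} ( p ln(ln(e+|U|)) + 1/ln(e+|U|) ), where f_ε'(U) = (|U|^{p-1}/(ln(e+|U|))^ε)(p - ε|U|/((e+|U|)ln(e+|U|))) and f_0'(U) = p|U|^{p-1}. -/
open Real

/-!
Writing `s = (log (e + |U|))^(-ε) ∈ (0, 1]`, the difference equals
`-|U|^(p-1) (p (1 - s) + s ε |U| / ((e + |U|) log (e + |U|)))`, a nonpositive quantity.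
The first term is controlled by `1 - s ≤ ε log (log (e + |U|))`, which is `1 - y ≤ exp (-y)`,
and the second by `s ≤ 1` and `|U| ≤ e + |U|`.
-/

lemma one_sub_inv_rpow_le_mul_log {x : ℝ} (hx : 0 < x) (ε : ℝ) :
    1 - (x ^ ε)⁻¹ ≤ ε * log x := by
  rw [← rpow_neg hx.le, rpow_def_of_pos hx]
  linarith [add_one_le_exp (log x * -ε)]

lemma one_le_log_exp_one_add {x : ℝ} (hx : 0 ≤ x) : 1 ≤ log (exp 1 + x) := by
  rw [le_log_iff_exp_le (by positivity)]
  linarith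

lemma mul_div_add_mul_le_div {ε x c L : ℝ} (hε : 0 ≤ ε) (hx : 0 ≤ x) (hc : 0 < c) (hL : 0 < L) :
    ε * x / ((c + x) * L) ≤ ε / L := by
  rw [div_le_div_iff₀ (by positivity) hL]
  nlinarith [mul_nonneg (mul_nonneg hε hc.le) hL.le]

lemma abs_div_rpow_mul_sub_le {a p L ε B : ℝ} (ha : 0 ≤ a) (hp : 0 ≤ p) (hL : 1 ≤ L)
    (hε : 0 ≤ ε) (hB0 : 0 ≤ B) (hB : B ≤ ε / L) :
    |a / L ^ ε * (p - B) - p * a| ≤ ε * a * (p * log L + 1 / L) := by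
  set s := (L ^ ε)⁻¹ with hs
  have hs0 : 0 ≤ s := by positivity
  have hs1 : s ≤ 1 := inv_le_one_of_one_le₀ (one_le_rpow hL hε)
  have hkey : 1 - s ≤ ε * log L := one_sub_inv_rpow_le_mul_log (by linarith) ε
  have hdiff : a / L ^ ε * (p - B) - p * a = -(a * (p * (1 - s) + s * B)) := by
    rw [hs, div_eq_mul_inv]
    ring
  have hs1' : 0 ≤ 1 - s := by linarith
  rw [hdiff, abs_neg, abs_of_nonneg (by positivity)]
  calc a * (p * (1 - s) + s * B) ≤ a * (p * (ε * log L) + 1 * (ε / L)) := by gcongr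
    _ = ε * a * (p * log L + 1 / L) := by ring

theorem stmt_4_general (p : ℝ) (hp : 1 < p) (ε : ℝ) (hε0 : 0 ≤ ε) (U : ℝ) :
    |(|U| ^ (p - 1) / (Real.log (Real.exp 1 + |U|)) ^ ε) *
        (p - ε * |U| / ((Real.exp 1 + |U|) * Real.log (Real.exp 1 + |U|))) -
      p * |U| ^ (p - 1)| ≤
    ε * |U| ^ (p - 1) *
      (p * Real.log (Real.log (Real.exp 1 + |U|)) + 1 / Real.log (Real.exp 1 + |U|)) := by
  have hL : 1 ≤ log (exp 1 + |U|) := one_le_log_exp_one_add (abs_nonneg U)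
  exact abs_div_rpow_mul_sub_le (rpow_nonneg (abs_nonneg U) _) (by linarith) hL hε0
    (by positivity) (mul_div_add_mul_le_div hε0 (abs_nonneg U) (exp_pos 1) (by linarith))

theorem stmt_4 (p : ℝ) (hp : 1 < p) (ε : ℝ) (hε0 : 0 ≤ ε) (hε1 : ε ≤ 1) (U : ℝ) :
    |(|U| ^ (p - 1) / (Real.log (Real.exp 1 + |U|)) ^ ε) *
        (p - ε * |U| / ((Real.exp 1 + |U|) * Real.log (Real.exp 1 + |U|))) -
      p * |U| ^ (p - 1)| ≤
    ε * |U| ^ (p - 1) *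
      (p * Real.log (Real.log (Real.exp 1 + |U|)) + 1 / Real.log (Real.exp 1 + |U|)) :=
  stmt_4_general p hp ε hε0 U
end

section
/- Let m ≥ 1 and M a symmetric positive definite m×m real matrix. Then F(Λ) = (1/2) Λᵀ M Λ - Σᵢ ln Λᵢ has a unique critical point Λ* in (0,∞)^m, this Λ* is the global minimum of F on (0,∞)^m, it satisfies the system (MΛ*)ᵢ = 1/Λ*ᵢ for all i, and F(Λ*) = m/2 - Σᵢ ln Λ*ᵢ. -/
open Real Matrix

/-!
Let `F Λ = ½ Λᵀ M Λ - Σ log Λᵢ` (`logBarrierEnergy M`). In logarithmic coordinates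
`Λ = exp x` the energy is a continuous function on all of `ℝ^m`, and positive definiteness
(`Λᵀ M Λ ≥ c |Λ|²`) makes it grow at least like `‖x‖`, so it attains a global minimum; at an
interior minimum the directional derivatives vanish, which gives `(M Λ)ᵢ = 1 / Λᵢ`.
Conversely, if `L` solves these equations then for `Λ = L + d`
`F Λ - F L = ½ dᵀ M d + Σ (Λᵢ / Lᵢ - 1 - log (Λᵢ / Lᵢ)) ≥ ½ dᵀ M d > 0` when `d ≠ 0`,
so any solution is the strict global minimizer, hence unique; and `Lᵀ M L = Σ Lᵢ (M L)ᵢ = m`.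
-/

open Filter

theorem exists_pos_mul_norm_sq_le {E : Type*} [NormedAddCommGroup E] [NormedSpace ℝ E]
    [ProperSpace E] {q : E → ℝ} (hq : Continuous q)
    (hsmul : ∀ (t : ℝ) (v : E), q (t • v) = t ^ 2 * q v) (hpos : ∀ v, v ≠ 0 → 0 < q v) :
    ∃ c, 0 < c ∧ ∀ v, c * ‖v‖ ^ 2 ≤ q v := by
  have hq0 : q 0 = 0 := by simpa using hsmul 0 0
  rcases subsingleton_or_nontrivial E with _ | _
  · exact ⟨1, one_pos, fun v => by simp [Subsingleton.elim v 0, hq0]⟩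
  obtain ⟨u, hu, hmin⟩ := (isCompact_sphere (0 : E) 1).exists_isMinOn
    (NormedSpace.sphere_nonempty.2 zero_le_one) hq.continuousOn
  have hu0 : u ≠ 0 := ne_zero_of_mem_unit_sphere ⟨u, hu⟩
  refine ⟨q u, hpos u hu0, fun v => ?_⟩
  rcases eq_or_ne v 0 with rfl | hv
  · simp [hq0]
  have hv' : ‖v‖⁻¹ • v ∈ Metric.sphere (0 : E) 1 := by simp [norm_smul, hv]
  calc q u * ‖v‖ ^ 2 ≤ q (‖v‖⁻¹ • v) * ‖v‖ ^ 2 := by gcongr; exact hmin hv'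
    _ = q v := by rw [hsmul]; field_simp

theorem Matrix.exists_pos_mul_dotProduct_self_le {ι : Type*} [Fintype ι] {M : Matrix ι ι ℝ}
    (hpos : ∀ v : ι → ℝ, v ≠ 0 → 0 < v ⬝ᵥ M *ᵥ v) :
    ∃ c, 0 < c ∧ ∀ v : ι → ℝ, c * (v ⬝ᵥ v) ≤ v ⬝ᵥ M *ᵥ v := by
  obtain ⟨c, hc, h⟩ := exists_pos_mul_norm_sq_le (E := EuclideanSpace ℝ ι)
    (q := fun v => v.ofLp ⬝ᵥ M *ᵥ v.ofLp) (by fun_prop)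
    (fun t v => by
      simp only [WithLp.ofLp_smul, mulVec_smul, dotProduct_smul, smul_dotProduct, smul_eq_mul]
      ring) (fun v hv => hpos _ (by simpa using hv))
  refine ⟨c, hc, fun v => ?_⟩
  have hv := h (WithLp.toLp 2 v)
  rw [EuclideanSpace.real_norm_sq_eq] at hv
  simpa [dotProduct, sq] using hv

theorem abs_sub_le_mul_exp_two_mul_sub {a : ℝ} (ha : 0 < a) (t : ℝ) :
    |t| - |log a + 1| ≤ a * exp (2 * t) - t := by
  have hexp : log a + 2 * t + 1 ≤ a * exp (2 * t) := by
    simpa [exp_add, exp_log ha] using add_one_le_exp (log a + 2 * t)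
  have hnonneg : 0 ≤ a * exp (2 * t) := by positivity
  rcases abs_cases t with ⟨ht, _⟩ | ⟨ht, _⟩ <;>
    linarith [neg_abs_le (log a + 1), abs_nonneg (log a + 1)]

namespace Matrix

variable {ι : Type*} [Fintype ι]

theorem IsSymm.add_dotProduct_mulVec_add {M : Matrix ι ι ℝ} (hM : M.IsSymm) (x y : ι → ℝ) :
    (x + y) ⬝ᵥ M *ᵥ (x + y) = x ⬝ᵥ M *ᵥ x + 2 * (y ⬝ᵥ M *ᵥ x) + y ⬝ᵥ M *ᵥ y := by
  have hcomm : x ⬝ᵥ M *ᵥ y = y ⬝ᵥ M *ᵥ x := by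
    rw [dotProduct_mulVec, ← mulVec_transpose, hM.eq, dotProduct_comm]
  rw [mulVec_add, dotProduct_add, add_dotProduct, add_dotProduct, hcomm]
  ring

theorem dotProduct_mulVec_eq_card {M : Matrix ι ι ℝ} {L : ι → ℝ} (hL : ∀ i, L i ≠ 0)
    (heuler : ∀ i, (M *ᵥ L) i = 1 / L i) : L ⬝ᵥ M *ᵥ L = Fintype.card ι := by
  simp [dotProduct, heuler, hL]

end Matrix

open Matrix

variable {ι : Type*} [Fintype ι]

noncomputable def logBarrierEnergy (M : Matrix ι ι ℝ) (Λ : ι → ℝ) : ℝ :=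
  1 / 2 * (Λ ⬝ᵥ M *ᵥ Λ) - ∑ i, log (Λ i)

theorem logBarrierEnergy_exp (M : Matrix ι ι ℝ) (x : ι → ℝ) :
    logBarrierEnergy M (fun i => exp (x i)) =
      1 / 2 * ((fun i => exp (x i)) ⬝ᵥ M *ᵥ fun i => exp (x i)) - ∑ i, x i := by
  simp [logBarrierEnergy]

theorem exists_norm_sub_le_logBarrierEnergy_exp {M : Matrix ι ι ℝ}
    (hpos : ∀ v : ι → ℝ, v ≠ 0 → 0 < v ⬝ᵥ M *ᵥ v) :
    ∃ C, ∀ x : ι → ℝ, ‖x‖ - C ≤ logBarrierEnergy M (fun i => exp (x i)) := by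
  obtain ⟨c, hc, hcoer⟩ := exists_pos_mul_dotProduct_self_le hpos
  refine ⟨Fintype.card ι * |log (c / 2) + 1|, fun x => ?_⟩
  have hnorm : ‖x‖ ≤ ∑ i, |x i| :=
    (pi_norm_le_iff_of_nonneg (by positivity)).2 fun i =>
      Finset.single_le_sum (f := fun j => |x j|) (fun j _ => abs_nonneg _) (Finset.mem_univ i)
  have hquad := hcoer fun i => exp (x i)
  calc ‖x‖ - Fintype.card ι * |log (c / 2) + 1|
      ≤ ∑ i, (|x i| - |log (c / 2) + 1|) := by
        rw [Finset.sum_sub_distrib, Finset.sum_const, Finset.card_univ, nsmul_eq_mul]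
        linarith
    _ ≤ ∑ i, (c / 2 * exp (2 * x i) - x i) :=
        Finset.sum_le_sum fun i _ => abs_sub_le_mul_exp_two_mul_sub (by positivity) (x i)
    _ = 1 / 2 * (c * ((fun i => exp (x i)) ⬝ᵥ fun i => exp (x i))) - ∑ i, x i := by
        simp only [dotProduct, Finset.sum_sub_distrib, Finset.mul_sum, ← exp_add]
        ring_nf
    _ ≤ logBarrierEnergy M (fun i => exp (x i)) := by
        rw [logBarrierEnergy_exp]; linarith

theorem exists_forall_logBarrierEnergy_le {M : Matrix ι ι ℝ}
    (hpos : ∀ v : ι → ℝ, v ≠ 0 → 0 < v ⬝ᵥ M *ᵥ v) :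
    ∃ L : ι → ℝ, (∀ i, 0 < L i) ∧
      ∀ Λ : ι → ℝ, (∀ i, 0 < Λ i) → logBarrierEnergy M L ≤ logBarrierEnergy M Λ := by
  have hcont : Continuous fun x : ι → ℝ => logBarrierEnergy M (fun i => exp (x i)) := by
    simp only [logBarrierEnergy_exp]
    fun_prop
  obtain ⟨C, hC⟩ := exists_norm_sub_le_logBarrierEnergy_exp hpos
  obtain ⟨x₀, hx₀⟩ := hcont.exists_forall_le <|
    tendsto_atTop_mono hC (tendsto_atTop_add_const_right _ _ tendsto_norm_cocompact_atTop)
  refine ⟨fun i => exp (x₀ i), fun i => exp_pos _, fun Λ hΛ => ?_⟩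
  simpa [exp_log (hΛ _)] using hx₀ fun i => log (Λ i)

theorem hasDerivAt_logBarrierEnergy_add_smul {M : Matrix ι ι ℝ} (hM : M.IsSymm) {L : ι → ℝ}
    (hL : ∀ i, 0 < L i) (v : ι → ℝ) :
    HasDerivAt (fun t : ℝ => logBarrierEnergy M (L + t • v))
      (v ⬝ᵥ M *ᵥ L - ∑ i, v i / L i) 0 := by
  have hpoly : (fun t : ℝ => (L + t • v) ⬝ᵥ M *ᵥ (L + t • v)) =
      fun t => L ⬝ᵥ M *ᵥ L + t * (2 * (v ⬝ᵥ M *ᵥ L)) + t ^ 2 * (v ⬝ᵥ M *ᵥ v) := by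
    ext t
    rw [hM.add_dotProduct_mulVec_add]
    simp only [mulVec_smul, dotProduct_smul, smul_dotProduct, smul_eq_mul]
    ring
  have hquad : HasDerivAt (fun t : ℝ => (L + t • v) ⬝ᵥ M *ᵥ (L + t • v))
      (2 * (v ⬝ᵥ M *ᵥ L)) 0 := by
    rw [hpoly]
    simpa using (((hasDerivAt_id' (0 : ℝ)).mul_const _).const_add _).fun_add
      ((hasDerivAt_pow 2 (0 : ℝ)).mul_const (v ⬝ᵥ M *ᵥ v))
  have hlog : HasDerivAt (fun t : ℝ => ∑ i, log ((L + t • v) i)) (∑ i, v i / L i) 0 := by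
    refine HasDerivAt.fun_sum fun i _ => ?_
    simpa using (((hasDerivAt_id (0 : ℝ)).mul_const (v i)).const_add (L i)).log
      (by simpa using (hL i).ne')
  exact ((hquad.const_mul (1 / 2)).fun_sub hlog).congr_deriv (by ring)

theorem mulVec_eq_one_div_of_forall_logBarrierEnergy_le [DecidableEq ι] {M : Matrix ι ι ℝ}
    (hM : M.IsSymm) {L : ι → ℝ} (hL : ∀ i, 0 < L i)
    (hmin : ∀ Λ : ι → ℝ, (∀ i, 0 < Λ i) → logBarrierEnergy M L ≤ logBarrierEnergy M Λ)
    (i : ι) : (M *ᵥ L) i = 1 / L i := by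
  have hopen : IsOpen (Set.univ.pi fun _ : ι => Set.Ioi (0 : ℝ)) :=
    isOpen_set_pi Set.finite_univ fun _ _ => isOpen_Ioi
  have hline : Continuous fun t : ℝ => L + t • Pi.single i 1 := by fun_prop
  have hloc : IsLocalMin (fun t : ℝ => logBarrierEnergy M (L + t • Pi.single i 1)) 0 := by
    filter_upwards [hline.continuousAt.preimage_mem_nhds
      (hopen.mem_nhds (by simpa using hL))] with t ht
    simpa using hmin _ (by simpa using ht)
  have := hloc.hasDerivAt_eq_zero (hasDerivAt_logBarrierEnergy_add_smul hM hL _)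
  simpa [single_dotProduct, Pi.single_apply, ite_div, sub_eq_zero] using this

theorem logBarrierEnergy_lt_of_mulVec_eq_one_div {M : Matrix ι ι ℝ} (hM : M.IsSymm)
    (hpos : ∀ v : ι → ℝ, v ≠ 0 → 0 < v ⬝ᵥ M *ᵥ v) {L Λ : ι → ℝ} (hL : ∀ i, 0 < L i)
    (heuler : ∀ i, (M *ᵥ L) i = 1 / L i) (hΛ : ∀ i, 0 < Λ i) (hne : Λ ≠ L) :
    logBarrierEnergy M L < logBarrierEnergy M Λ := by
  obtain ⟨d, rfl⟩ : ∃ d, Λ = L + d := ⟨Λ - L, by abel⟩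
  have hd : d ≠ 0 := by rintro rfl; simp at hne
  have hcross : d ⬝ᵥ M *ᵥ L = ∑ i, d i / L i := by
    simp only [dotProduct, heuler, mul_one_div]
  have hlog : ∑ i, log ((L + d) i) - ∑ i, log (L i) ≤ ∑ i, d i / L i := by
    rw [← Finset.sum_sub_distrib]
    gcongr with i
    have hLi := hL i
    rw [← log_div (hΛ i).ne' hLi.ne']
    calc log ((L + d) i / L i) ≤ (L + d) i / L i - 1 := log_le_sub_one_of_pos (div_pos (hΛ i) hLi)
      _ = d i / L i := by rw [Pi.add_apply]; field_simp; ring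
  have := hpos d hd
  unfold logBarrierEnergy
  rw [hM.add_dotProduct_mulVec_add]
  linarith

theorem stmt_16_general (m : ℕ) (M : Matrix (Fin m) (Fin m) ℝ)
    (hsymm : M.IsSymm) (hpos : ∀ v : Fin m → ℝ, v ≠ 0 → 0 < v ⬝ᵥ M.mulVec v) :
    ∃ L : Fin m → ℝ, (∀ i, 0 < L i) ∧
      (∀ i, M.mulVec L i = 1 / L i) ∧
      (∀ Λ : Fin m → ℝ, (∀ i, 0 < Λ i) → Λ ≠ L →
        (1 / 2) * (L ⬝ᵥ M.mulVec L) - ∑ i, Real.log (L i) <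
          (1 / 2) * (Λ ⬝ᵥ M.mulVec Λ) - ∑ i, Real.log (Λ i)) ∧
      ((1 / 2) * (L ⬝ᵥ M.mulVec L) - ∑ i, Real.log (L i) =
        (m : ℝ) / 2 - ∑ i, Real.log (L i)) ∧
      (∀ Λ : Fin m → ℝ, (∀ i, 0 < Λ i) → (∀ i, M.mulVec Λ i = 1 / Λ i) → Λ = L) := by
  obtain ⟨L, hL, hmin⟩ := exists_forall_logBarrierEnergy_le hpos
  have heuler := mulVec_eq_one_div_of_forall_logBarrierEnergy_le hsymm hL hmin
  have hstrict := fun Λ => logBarrierEnergy_lt_of_mulVec_eq_one_div hsymm hpos (Λ := Λ) hL heuler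
  refine ⟨L, hL, heuler, hstrict, ?_, fun Λ hΛ hΛeuler => ?_⟩
  · rw [dotProduct_mulVec_eq_card (fun i => (hL i).ne') heuler, Fintype.card_fin]
    ring
  · by_contra hne
    exact (hstrict Λ hΛ hne).asymm
      (logBarrierEnergy_lt_of_mulVec_eq_one_div hsymm hpos hΛ hΛeuler hL (Ne.symm hne))

theorem stmt_16 (m : ℕ) (hm : 1 ≤ m) (M : Matrix (Fin m) (Fin m) ℝ)
    (hsymm : M.IsSymm) (hpos : ∀ v : Fin m → ℝ, v ≠ 0 → 0 < v ⬝ᵥ M.mulVec v) :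
    ∃ L : Fin m → ℝ, (∀ i, 0 < L i) ∧
      (∀ i, M.mulVec L i = 1 / L i) ∧
      (∀ Λ : Fin m → ℝ, (∀ i, 0 < Λ i) → Λ ≠ L →
        (1 / 2) * (L ⬝ᵥ M.mulVec L) - ∑ i, Real.log (L i) <
          (1 / 2) * (Λ ⬝ᵥ M.mulVec Λ) - ∑ i, Real.log (Λ i)) ∧
      ((1 / 2) * (L ⬝ᵥ M.mulVec L) - ∑ i, Real.log (L i) =
        (m : ℝ) / 2 - ∑ i, Real.log (L i)) ∧
      (∀ Λ : Fin m → ℝ, (∀ i, 0 < Λ i) → (∀ i, M.mulVec Λ i = 1 / Λ i) → Λ = L) :=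
  stmt_16_general m M hsymm hpos
end
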